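/- Let ȳ and y be complex numbers, i ≠ j indices, and define the complex n×n matrix Y_{ij} = (ȳ + y) e_i e_iᵀ − y e_i e_jᵀ. Then for every v ∈ ℂⁿ, tr(H_q(Y_{ij}) · X Xᵀ) = Im(v_i · conj((ȳ + y) v_i − y v_j)); that is, the trace of H_q(Y_{ij}) against W = X Xᵀ equals the reactive power flow on line (i,j). -/

import Mathlib

/-!
Write `v = a + i b` and `A = B + i C` with `a, b, B, C` real. Expanding, `Im (v* A v)` is the sum
of the real quadratic forms `aᵀ C a + aᵀ B b − bᵀ B a + bᵀ C b`. Since `xᵀ Mᵀ y = yᵀ M x`, the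
symmetrised blocks of `H_q(A)` give `Xᵀ H_q(A) X = −Im (v* A v)`, and the trace against `X Xᵀ` is
this quadratic form. For `A = Y_ij` one has `v* Y_ij v = conj v_i · ((ȳ + y) v_i − y v_j)`, and
`−Im (conj z) = Im z`.
-/

open Matrix

/-- The stacked real/imaginary part vector `X = [Re v; Im v]` of a complex vector `v`. -/
noncomputable def stackX {n : ℕ} (v : Fin n → ℂ) : Fin n ⊕ Fin n → ℝ :=
  Sum.elim (fun i => (v i).re) (fun i => (v i).im)

/-- The real block matrix
`H_q(A) = (−1/2) [[Im(A + Aᵀ), Re(A − Aᵀ)], [Re(Aᵀ − A), Im(A + Aᵀ)]]`. -/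
noncomputable def Hq {n : ℕ} (A : Matrix (Fin n) (Fin n) ℂ) :
    Matrix (Fin n ⊕ Fin n) (Fin n ⊕ Fin n) ℝ :=
  (-(1 : ℝ) / 2) • Matrix.fromBlocks
    ((A + Aᵀ).map Complex.im) ((A - Aᵀ).map Complex.re)
    ((Aᵀ - A).map Complex.re) ((A + Aᵀ).map Complex.im)

def lineAdmittance {ι : Type*} [DecidableEq ι] (ybar y : ℂ) (i j : ι) : Matrix ι ι ℂ :=
  (ybar + y) • vecMulVec (Pi.single i 1) (Pi.single i 1)
    - y • vecMulVec (Pi.single i 1) (Pi.single j 1)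

theorem Matrix.trace_mul_vecMulVec_self {ι R : Type*} [Fintype ι] [CommSemiring R]
    (M : Matrix ι ι R) (x : ι → R) : (M * vecMulVec x x).trace = x ⬝ᵥ M *ᵥ x := by
  rw [mul_vecMulVec, trace_vecMulVec, dotProduct_comm]

theorem Matrix.im_star_dotProduct_mulVec {ι : Type*} [Fintype ι] (A : Matrix ι ι ℂ)
    (v : ι → ℂ) :
    (star v ⬝ᵥ A *ᵥ v).im =
      (fun k => (v k).re) ⬝ᵥ A.map Complex.im *ᵥ (fun k => (v k).re)
        + (fun k => (v k).re) ⬝ᵥ A.map Complex.re *ᵥ (fun k => (v k).im)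
        - (fun k => (v k).im) ⬝ᵥ A.map Complex.re *ᵥ (fun k => (v k).re)
        + (fun k => (v k).im) ⬝ᵥ A.map Complex.im *ᵥ (fun k => (v k).im) := by
  simp only [dotProduct, mulVec, Complex.im_sum, Finset.mul_sum, ← Finset.sum_add_distrib,
    ← Finset.sum_sub_distrib, map_apply, Pi.star_apply, Complex.star_def]
  refine Finset.sum_congr rfl fun k _ => Finset.sum_congr rfl fun l _ => ?_
  simp only [Complex.mul_im, Complex.mul_re, Complex.conj_re, Complex.conj_im]
  ring

theorem stackX_dotProduct_Hq_mulVec {n : ℕ} (A : Matrix (Fin n) (Fin n) ℂ) (v : Fin n → ℂ) :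
    stackX v ⬝ᵥ Hq A *ᵥ stackX v = -(star v ⬝ᵥ A *ᵥ v).im := by
  rw [im_star_dotProduct_mulVec, Hq, stackX, smul_mulVec, dotProduct_smul, fromBlocks_mulVec,
    sumElim_dotProduct_sumElim]
  simp only [Sum.elim_comp_inl, Sum.elim_comp_inr, Matrix.map_add _ Complex.add_im,
    Matrix.map_sub _ Complex.sub_re, transpose_map, add_mulVec, sub_mulVec, dotProduct_add,
    dotProduct_sub, dotProduct_transpose_mulVec, smul_eq_mul]
  ring

theorem star_dotProduct_lineAdmittance_mulVec {ι : Type*} [Fintype ι] [DecidableEq ι]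
    (ybar y : ℂ) (i j : ι) (v : ι → ℂ) :
    star v ⬝ᵥ lineAdmittance ybar y i j *ᵥ v = star (v i) * ((ybar + y) * v i - y * v j) := by
  simp only [lineAdmittance, sub_mulVec, smul_mulVec, vecMulVec_mulVec, single_dotProduct,
    one_mul, op_smul_eq_smul, dotProduct_sub, dotProduct_smul, dotProduct_single, Pi.star_apply,
    mul_one, smul_eq_mul]
  ring

theorem trace_Hq_lineflow_general {n : ℕ} (ybar y : ℂ) (i j : Fin n)
    (Yij : Matrix (Fin n) (Fin n) ℂ)
    (hYij : Yij = (ybar + y) • vecMulVec (Pi.single i (1 : ℂ)) (Pi.single i (1 : ℂ))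
      - y • vecMulVec (Pi.single i (1 : ℂ)) (Pi.single j (1 : ℂ)))
    (v : Fin n → ℂ) :
    (Hq Yij * vecMulVec (stackX v) (stackX v)).trace
      = (v i * starRingEnd ℂ ((ybar + y) * v i - y * v j)).im := by
  have hY : Yij = lineAdmittance ybar y i j := hYij
  rw [trace_mul_vecMulVec_self, stackX_dotProduct_Hq_mulVec, hY,
    star_dotProduct_lineAdmittance_mulVec, Complex.star_def, ← Complex.conj_im, map_mul,
    Complex.conj_conj, mul_comm]

/-- with `Y_{ij} = (ȳ + y) e_i e_iᵀ − y e_i e_jᵀ` and `i ≠ j`,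
`tr(H_q(Y_{ij}) · X Xᵀ) = Im(v_i ⋅ conj((ȳ + y) v_i − y v_j))`,
the reactive power flow on line `(i,j)`. -/
theorem trace_Hq_lineflow {n : ℕ} (ybar y : ℂ) (i j : Fin n) (hij : i ≠ j)
    (Yij : Matrix (Fin n) (Fin n) ℂ)
    (hYij : Yij = (ybar + y) • vecMulVec (Pi.single i (1 : ℂ)) (Pi.single i (1 : ℂ))
      - y • vecMulVec (Pi.single i (1 : ℂ)) (Pi.single j (1 : ℂ)))
    (v : Fin n → ℂ) :
    (Hq Yij * vecMulVec (stackX v) (stackX v)).trace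
      = (v i * starRingEnd ℂ ((ybar + y) * v i - y * v j)).im :=
  trace_Hq_lineflow_general ybar y i j Yij hYij v
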